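/- For each nonzero x ∈ ℝⁿ there exists a unique s ∈ ℝ such that ‖d(-s)x‖ = 1, where d is a strictly monotone continuous linear dilation; hence the canonical homogeneous norm ‖x‖_d = e^s is well-defined. -/

import Mathlib

/-!
Along the orbit `y s = d(-s) x` the energy `V s = ‖y s‖²` satisfies
`V' = -yᵀ(PG + GᵀP)y`, and since two positive definite forms are comparable this gives
`V' ≤ -ε V` for some `ε > 0`. Hence `log V` has derivative at most `-ε`, so it is a strictly
decreasing bijection `ℝ → ℝ` and takes the value `0` exactly once.
-/

open Matrix NormedSpace

noncomputable def dil {n : ℕ} (G : Matrix (Fin n) (Fin n) ℝ) (s : ℝ) :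
    Matrix (Fin n) (Fin n) ℝ :=
  NormedSpace.exp (s • G)

noncomputable def wnorm {n : ℕ} (P : Matrix (Fin n) (Fin n) ℝ) (x : Fin n → ℝ) : ℝ :=
  Real.sqrt (x ⬝ᵥ P.mulVec x)

open Filter

theorem bijective_of_hasDerivAt_le_neg {f f' : ℝ → ℝ} {ε : ℝ} (hε : 0 < ε)
    (hf : ∀ s, HasDerivAt f (f' s) s) (hf' : ∀ s, f' s ≤ -ε) : Function.Bijective f := by
  have hdiff : Differentiable ℝ f := fun s => (hf s).differentiableAt
  refine ⟨(strictAnti_of_deriv_neg fun s => ?_).injective, ?_⟩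
  · rw [(hf s).deriv]
    linarith [hf' s]
  have hanti : Antitone fun s => f s + ε * s := by
    refine antitone_of_deriv_nonpos (hdiff.add (differentiable_id.const_mul ε)) fun s => ?_
    have h : HasDerivAt (fun t => f t + ε * t) (f' s + ε * 1) s :=
      (hf s).add ((hasDerivAt_id s).const_mul ε)
    rw [h.deriv]
    linarith [hf' s]
  have hbot : Tendsto (fun s => (f s + ε * s) + -ε * s) atTop atBot :=
    tendsto_atBot_add_left_of_ge' _ (f 0) ((eventually_ge_atTop 0).mono fun s hs => by
      simpa using hanti hs) (tendsto_id.const_mul_atTop_of_neg (neg_lt_zero.mpr hε))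
  have htop : Tendsto (fun s => (f s + ε * s) + -ε * s) atBot atTop :=
    tendsto_atTop_add_left_of_le' _ (f 0) ((eventually_le_atBot 0).mono fun s hs => by
      simpa using hanti hs) (tendsto_id.const_mul_atBot_of_neg (neg_lt_zero.mpr hε))
  simp only [neg_mul, add_neg_cancel_right] at hbot htop
  exact hdiff.continuous.surjective' htop hbot

namespace Matrix

variable {ι : Type*} [Fintype ι]

theorem smul_dotProduct_mulVec_smul (Q : Matrix ι ι ℝ) (c : ℝ) (y : ι → ℝ) :
    (c • y) ⬝ᵥ Q *ᵥ (c • y) = c ^ 2 * (y ⬝ᵥ Q *ᵥ y) := by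
  rw [mulVec_smul, smul_dotProduct, dotProduct_smul, smul_eq_mul, smul_eq_mul]
  ring

theorem PosDef.exists_pos_mul_dotProduct_mulVec_le {P Q : Matrix ι ι ℝ} (hP : P.PosDef)
    (hQ : Q.PosDef) :
    ∃ ε > 0, ∀ y : ι → ℝ, ε * (y ⬝ᵥ P *ᵥ y) ≤ y ⬝ᵥ Q *ᵥ y := by
  set R : (ι → ℝ) → ℝ := fun y => (y ⬝ᵥ Q *ᵥ y) / (y ⬝ᵥ P *ᵥ y)
  have hsphere : ∀ y ∈ Metric.sphere (0 : ι → ℝ) 1, y ≠ 0 := fun y hy h => by simp [h] at hy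
  have hR : ContinuousOn R (Metric.sphere 0 1) :=
    ContinuousOn.div (by fun_prop) (by fun_prop) fun y hy =>
      (hP.dotProduct_mulVec_pos (hsphere y hy)).ne'
  obtain ⟨ε, hε, hεR⟩ := (isCompact_sphere (0 : ι → ℝ) 1).exists_forall_le' hR
    (a := 0) fun y hy => div_pos (by simpa using hQ.dotProduct_mulVec_pos (hsphere y hy))
      (by simpa using hP.dotProduct_mulVec_pos (hsphere y hy))
  refine ⟨ε, hε, fun y => ?_⟩
  rcases eq_or_ne y 0 with rfl | hy
  · simp
  -- `R` is invariant under scaling, so its lower bound on the unit sphere holds everywhere.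
  have hRy : R (‖y‖⁻¹ • y) = R y := by
    have : ‖y‖⁻¹ ^ 2 ≠ 0 := by positivity
    simp only [R, smul_dotProduct_mulVec_smul, mul_div_mul_left _ _ this]
  have hεy := hεR (‖y‖⁻¹ • y) (by
    rw [mem_sphere_zero_iff_norm, norm_smul, norm_inv, norm_norm,
      inv_mul_cancel₀ (norm_ne_zero_iff.mpr hy)])
  rwa [hRy, le_div_iff₀ (by simpa using hP.dotProduct_mulVec_pos hy)] at hεy

theorem hasDerivAt_dotProduct_mulVec (Q : Matrix ι ι ℝ) {u : ℝ → ι → ℝ} {u' : ι → ℝ} {s : ℝ}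
    (hu : HasDerivAt u u' s) :
    HasDerivAt (fun t => u t ⬝ᵥ Q *ᵥ u t) (u s ⬝ᵥ Q *ᵥ u' + u' ⬝ᵥ Q *ᵥ u s) s := by
  classical
  simpa [toLinearMap₂'_apply'] using
    (toLinearMap₂' ℝ Q).toContinuousBilinearMap.hasDerivAt_of_bilinear (fun _ => hu) fun _ => hu

theorem dotProduct_mulVec_mulVec_add_mulVec_dotProduct_mulVec (P G : Matrix ι ι ℝ) (y : ι → ℝ) :
    y ⬝ᵥ P *ᵥ (G *ᵥ y) + (G *ᵥ y) ⬝ᵥ P *ᵥ y = y ⬝ᵥ (P * G + Gᵀ * P) *ᵥ y := by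
  rw [add_mulVec, dotProduct_add, ← mulVec_mulVec, ← mulVec_mulVec, dotProduct_mulVec y Gᵀ,
    vecMul_transpose]

end Matrix

section Dilation

variable {n : ℕ}

theorem dil_mulVec_injective (G : Matrix (Fin n) (Fin n) ℝ) (s : ℝ) :
    Function.Injective (dil G s *ᵥ ·) :=
  mulVec_injective_iff_isUnit.mpr (Matrix.isUnit_exp _)

theorem hasDerivAt_dil_mulVec (G : Matrix (Fin n) (Fin n) ℝ) (x : Fin n → ℝ) (s : ℝ) :
    HasDerivAt (fun t => dil G t *ᵥ x) (G *ᵥ (dil G s *ᵥ x)) s := by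
  -- Any Banach-algebra norm on matrices will do: the statement only sees the topology of vectors.
  let : NormedRing (Matrix (Fin n) (Fin n) ℝ) := Matrix.linftyOpNormedRing
  let : NormedAlgebra ℝ (Matrix (Fin n) (Fin n) ℝ) := Matrix.linftyOpNormedAlgebra
  have hexp : HasDerivAt (dil G) (G * dil G s) s := hasDerivAt_exp_smul_const' G s
  rw [mulVec_mulVec]
  exact ((mulVecBilin ℝ ℝ).flip x).toContinuousLinearMap.hasFDerivAt.comp_hasDerivAt s hexp

theorem hasDerivAt_dotProduct_mulVec_dil_neg (P G : Matrix (Fin n) (Fin n) ℝ) (x : Fin n → ℝ)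
    (s : ℝ) :
    HasDerivAt (fun t => (dil G (-t) *ᵥ x) ⬝ᵥ P *ᵥ (dil G (-t) *ᵥ x))
      (-((dil G (-s) *ᵥ x) ⬝ᵥ (P * G + Gᵀ * P) *ᵥ (dil G (-s) *ᵥ x))) s := by
  have hy : HasDerivAt (fun t => dil G (-t) *ᵥ x) (-(G *ᵥ (dil G (-s) *ᵥ x))) s := by
    rw [← neg_one_smul ℝ (G *ᵥ _)]
    exact (hasDerivAt_dil_mulVec G x (-s)).scomp s (hasDerivAt_neg s)
  refine (hasDerivAt_dotProduct_mulVec P hy).congr_deriv ?_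
  rw [← dotProduct_mulVec_mulVec_add_mulVec_dotProduct_mulVec, mulVec_neg, dotProduct_neg,
    neg_dotProduct, neg_add]

end Dilation

/-- for a strictly monotone continuous linear dilation (P ≻ 0, PG + GᵀP ≻ 0),
for each nonzero `x` there is a unique `s ∈ ℝ` with `‖d(-s)x‖ = 1`; hence the canonical
homogeneous norm `‖x‖_d = e^s` is well defined. -/
theorem stmt3 {n : ℕ} (P G : Matrix (Fin n) (Fin n) ℝ) (hP : P.PosDef)
    (hmon : (P * G + Gᵀ * P).PosDef) :
    ∀ x : Fin n → ℝ, x ≠ 0 → ∃! s : ℝ, wnorm P (dil G (-s) *ᵥ x) = 1 := by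
  intro x hx
  set y : ℝ → Fin n → ℝ := fun s => dil G (-s) *ᵥ x
  have hV : ∀ s, 0 < y s ⬝ᵥ P *ᵥ y s := fun s => by
    have hy : y s ≠ 0 := (dil_mulVec_injective G (-s)).ne_iff' (mulVec_zero _) |>.mpr hx
    simpa using hP.dotProduct_mulVec_pos hy
  obtain ⟨ε, hε, hQP⟩ := hP.exists_pos_mul_dotProduct_mulVec_le hmon
  have hlogV : Function.Bijective fun s => Real.log (y s ⬝ᵥ P *ᵥ y s) :=
    bijective_of_hasDerivAt_le_neg hε
      (fun s => (hasDerivAt_dotProduct_mulVec_dil_neg P G x s).log (hV s).ne') fun s => by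
        rw [neg_div, neg_le_neg_iff, le_div_iff₀ (hV s)]
        exact hQP (y s)
  refine (existsUnique_congr fun s => ?_).mpr (hlogV.existsUnique 0)
  rw [wnorm, Real.sqrt_eq_one]
  exact ⟨fun h => (congrArg Real.log h).trans Real.log_one,
    fun h => Real.log_injOn_pos (hV s) (Set.mem_Ioi.mpr one_pos) (h.trans Real.log_one.symm)⟩
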